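/- Let σ ∈ T(λ,n) be a nonattacking filling with columns C_1,…,C_m, where C_j(i) = σ(i,j) and C_j has length c_j = λ'_j (note c_m = 1 since λ has strictly decreasing parts). Then Σ_{j=2}^m C(c_{j−1},2) − Σ_{j=2}^m ( inv(C_jC_{j−1}) − inv(C_j) ) = n(λ) − inv(σ), where C_jC_{j−1} is the two-column filling with left column C_j and right column C_{j−1}, inv of each filling is computed in its own shape, and C(c,2) is the binomial coefficient c choose 2. -/

import Mathlib

open Finset

namespace Compress

attribute [local instance] Classical.propDecidable

noncomputable section

/-! ### Permutations of `{1,…,n}`, 1-based conventions -/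

/-- The 1-based index `i ∈ {1,…,n}` as an element of `Fin n`. -/
def idx (n : ℕ) [NeZero n] (i : ℕ) : Fin n :=
  ⟨(i - 1) % n, Nat.mod_lt _ (Nat.pos_of_ne_zero (NeZero.ne n))⟩

/-- The 1-based value `w(i) ∈ {1,…,n}` of a permutation `w ∈ S_n`. -/
def pv {n : ℕ} [NeZero n] (w : Equiv.Perm (Fin n)) (i : ℕ) : ℕ :=
  (w (idx n i)).val + 1

/-- The transposition `(i,k)` of `{1,…,n}` (1-based). -/
def tr (n : ℕ) [NeZero n] (i k : ℕ) : Equiv.Perm (Fin n) :=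
  Equiv.swap (idx n i) (idx n k)

/-- The Coxeter length of `w ∈ S_n`, i.e. its number of inversions. -/
def len {n : ℕ} [NeZero n] (w : Equiv.Perm (Fin n)) : ℕ :=
  ((Finset.univ : Finset (Fin n × Fin n)).filter fun p => p.1 < p.2 ∧ w p.2 < w p.1).card

/-- Right multiplication of `w` by a list of transpositions (given as 1-based pairs),
taken from left to right. -/
def applyTs {n : ℕ} [NeZero n] (w : Equiv.Perm (Fin n)) (L : List (ℕ × ℕ)) :
    Equiv.Perm (Fin n) :=
  L.foldl (fun u p => u * tr n p.1 p.2) w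

/-! ### Subsequences of a list of transpositions, encoded by sets of positions -/

/-- The subsequence of the list `Δ` of transpositions occupying the (0-based) positions in `J`,
listed in increasing order of positions. -/
def pickP (Δ : List (ℕ × ℕ)) (J : Finset ℕ) : List (ℕ × ℕ) :=
  (J.sort (· ≤ ·)).map fun r => Δ.getD r (0, 0)

/-- `w r_1 ⋯ r_s` where `r_1,…,r_s` is the subsequence of `Δ` at positions `J`. -/
def wT {n : ℕ} [NeZero n] (w : Equiv.Perm (Fin n)) (Δ : List (ℕ × ℕ)) (J : Finset ℕ) :
    Equiv.Perm (Fin n) :=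
  applyTs w (pickP Δ J)

/-- The partial product `w r_1 ⋯ r_{a-1}` just before using the entry at position `r ∈ J`. -/
def stepPerm {n : ℕ} [NeZero n] (w : Equiv.Perm (Fin n)) (Δ : List (ℕ × ℕ)) (J : Finset ℕ)
    (r : ℕ) : Equiv.Perm (Fin n) :=
  applyTs w (pickP Δ (J.filter fun x => x < r))

/-- The entry at position `r ∈ J` is positive in the increasing-length convention:
`ℓ(w r_1⋯r_{a−1}) < ℓ(w r_1⋯r_a)`. -/
def isPosInc {n : ℕ} [NeZero n] (w : Equiv.Perm (Fin n)) (Δ : List (ℕ × ℕ)) (J : Finset ℕ)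
    (r : ℕ) : Prop :=
  len (stepPerm w Δ J r) <
    len (stepPerm w Δ J r * tr n (Δ.getD r (0, 0)).1 (Δ.getD r (0, 0)).2)

/-- The entry at position `r ∈ J` is positive in the decreasing-length convention
(a positive folding): `ℓ(w r_1⋯r_{a−1}) > ℓ(w r_1⋯r_a)`. -/
def isPosDec {n : ℕ} [NeZero n] (w : Equiv.Perm (Fin n)) (Δ : List (ℕ × ℕ)) (J : Finset ℕ)
    (r : ℕ) : Prop :=
  len (stepPerm w Δ J r * tr n (Δ.getD r (0, 0)).1 (Δ.getD r (0, 0)).2) <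
    len (stepPerm w Δ J r)

/-! ### The field `ℚ(q,t)` -/

/-- The field `ℚ(q,t)` of rational functions in two variables. -/
abbrev Kqt : Type := FractionRing (MvPolynomial (Fin 2) ℚ)

/-- The variable `q` of `ℚ(q,t)`. -/
def qq : Kqt := algebraMap (MvPolynomial (Fin 2) ℚ) Kqt (MvPolynomial.X 0)

/-- The variable `t` of `ℚ(q,t)`. -/
def tt : Kqt := algebraMap (MvPolynomial (Fin 2) ℚ) Kqt (MvPolynomial.X 1)

/-! ### The partition λ, its diagram and statistics on fillings -/

/-- `conj n lam j = λ'_j`, the length of column `j`. -/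
def conj (n : ℕ) (lam : ℕ → ℕ) (j : ℕ) : ℕ :=
  ((Finset.Icc 1 (n - 1)).filter fun i => j ≤ lam i).card

/-- The cells `(i,j)` of the Young diagram of λ: `1 ≤ i ≤ n−1`, `1 ≤ j ≤ λ_i`. -/
def cells (n : ℕ) (lam : ℕ → ℕ) : Finset (ℕ × ℕ) :=
  (Finset.Icc 1 (n - 1) ×ˢ Finset.Icc 1 (lam 1)).filter fun c => c.2 ≤ lam c.1

/-- Two cells attack each other: same column, or consecutive columns with the
left-column cell strictly above the right-column cell (column `j+1` is left of column `j`). -/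
def attack (u v : ℕ × ℕ) : Prop :=
  (u.2 = v.2 ∧ u.1 ≠ v.1) ∨ (u.2 = v.2 + 1 ∧ u.1 < v.1) ∨ (v.2 = u.2 + 1 ∧ v.1 < u.1)

/-- `u` comes before `v` in the reading order (columns right to left, i.e. column 1 first,
each column top to bottom). -/
def readBefore (u v : ℕ × ℕ) : Prop :=
  u.2 < v.2 ∨ (u.2 = v.2 ∧ u.1 < v.1)

/-- σ is a nonattacking filling of λ with entries in `{1,…,n}`, i.e. `σ ∈ T(λ,n)`. -/
def NonAttacking (n : ℕ) (lam : ℕ → ℕ) (σ : ℕ × ℕ → ℕ) : Prop :=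
  (∀ u ∈ cells n lam, σ u ∈ Finset.Icc 1 n) ∧
    ∀ u ∈ cells n lam, ∀ v ∈ cells n lam, attack u v → σ u ≠ σ v

/-- The descent set of a filling. -/
def DesSet (n : ℕ) (lam : ℕ → ℕ) (σ : ℕ × ℕ → ℕ) : Finset (ℕ × ℕ) :=
  (cells n lam).filter fun u => (u.1, u.2 + 1) ∈ cells n lam ∧ σ (u.1, u.2 + 1) < σ u

/-- `Diff(σ)`. -/
def DiffSet (n : ℕ) (lam : ℕ → ℕ) (σ : ℕ × ℕ → ℕ) : Finset (ℕ × ℕ) :=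
  (cells n lam).filter fun u => (u.1, u.2 + 1) ∈ cells n lam ∧ σ (u.1, u.2 + 1) ≠ σ u

/-- `arm(i,j) = λ_i − j`. -/
def armC (lam : ℕ → ℕ) (u : ℕ × ℕ) : ℕ := lam u.1 - u.2

/-- `leg(i,j) = λ'_j − i`. -/
def legC (n : ℕ) (lam : ℕ → ℕ) (u : ℕ × ℕ) : ℕ := conj n lam u.2 - u.1

/-- `maj(σ) = Σ_{u ∈ Des(σ)} arm(u)`. -/
def majStat (n : ℕ) (lam : ℕ → ℕ) (σ : ℕ × ℕ → ℕ) : ℕ :=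
  ∑ u ∈ DesSet n lam σ, armC lam u

/-- `|Inv(σ)|`: the number of pairs of attacking cells `u` before `v` in reading order
with `σ(u) > σ(v)`. -/
def invPairsL (n : ℕ) (lam : ℕ → ℕ) (σ : ℕ × ℕ → ℕ) : ℕ :=
  ((cells n lam ×ˢ cells n lam).filter fun x =>
    attack x.1 x.2 ∧ readBefore x.1 x.2 ∧ σ x.2 < σ x.1).card

/-- `inv(σ) = |Inv(σ)| − Σ_{u ∈ Des(σ)} leg(u)`. -/
def invStat (n : ℕ) (lam : ℕ → ℕ) (σ : ℕ × ℕ → ℕ) : ℤ :=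
  (invPairsL n lam σ : ℤ) - ∑ u ∈ DesSet n lam σ, (legC n lam u : ℤ)

/-- `n(λ) = Σ_i (i−1) λ_i`. -/
def nlam (n : ℕ) (lam : ℕ → ℕ) : ℕ :=
  ∑ i ∈ Finset.Icc 1 n, (i - 1) * lam i

/-- The Haglund–Haiman–Loehr-type weight of a filling:
`HHL(σ) = t^{n(λ)−inv(σ)} q^{maj(σ)} Π_{u∈Diff(σ)} (1−t)/(1−q^{arm(u)} t^{leg(u)+1})`. -/
def HHL (n : ℕ) (lam : ℕ → ℕ) (σ : ℕ × ℕ → ℕ) : Kqt :=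
  tt ^ ((nlam n lam : ℤ) - invStat n lam σ) * qq ^ majStat n lam σ *
    ∏ u ∈ DiffSet n lam σ, (1 - tt) / (1 - qq ^ armC lam u * tt ^ (legC n lam u + 1))

/-! ### The λ-chain Γ -/

/-- The row `(i,n),(i,n−1),…,(i,low)`. -/
def rowL (n i low : ℕ) : List (ℕ × ℕ) :=
  (List.range (n + 1 - low)).map fun r => (i, n - r)

/-- `Γ(k)`: rows `i = k, k−1, …, 1`, row `i` being `(i,n),…,(i,k+1)`. -/
def GammaK (n k : ℕ) : List (ℕ × ℕ) :=
  (List.range k).flatMap fun s => rowL n (k - s) (k + 1)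

/-- `Γ'(k)`: rows `i = k, k−1, …, 1`, row `i` being `(i,n),…,(i,k+2)`
(the last transposition `(i,k+1)` of each row of `Γ(k)` removed). -/
def GammaK' (n k : ℕ) : List (ℕ × ℕ) :=
  (List.range k).flatMap fun s => rowL n (k - s) (k + 2)

/-- The λ-chain `Γ = Γ_{λ_1} Γ_{λ_1−1} ⋯ Γ_2`, where `Γ_j = Γ'(λ'_j)` if
`j = min{i : λ'_i = λ'_j}` (equivalently `λ'_{j−1} ≠ λ'_j`) and `Γ_j = Γ(λ'_j)` otherwise.
Each entry records its segment index `j` together with the root `(i,k)`. -/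
def lamChain (n : ℕ) (lam : ℕ → ℕ) : List (ℕ × ℕ × ℕ) :=
  (List.range (lam 1 - 1)).flatMap fun s =>
    let j := lam 1 - s
    let seg :=
      if conj n lam (j - 1) = conj n lam j then GammaK n (conj n lam j)
      else GammaK' n (conj n lam j)
    seg.map fun p => (j, p.1, p.2)

/-- The underlying list of roots (transpositions) of the λ-chain. -/
def chainRoots (Γ : List (ℕ × ℕ × ℕ)) : List (ℕ × ℕ) := Γ.map fun e => e.2

/-! ### The Ram–Yip weight and the filling map -/

/-- The Ram–Yip weight `RY(w,T)` of a folding pair, where `T` is the subsequence of the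
λ-chain at positions `J`. -/
def RY (n : ℕ) [NeZero n] (lam : ℕ → ℕ) (w : Equiv.Perm (Fin n)) (J : Finset ℕ) : Kqt :=
  tt ^ (((len w : ℤ) - (len (wT w (chainRoots (lamChain n lam)) J) : ℤ) - (J.card : ℤ)) / 2) *
    (1 - tt) ^ J.card *
    ∏ r ∈ J,
      (let e := (lamChain n lam).getD r (0, 0, 0)
       let a := lam e.2.1 - (e.1 - 1)
       if isPosDec w (chainRoots (lamChain n lam)) J r then
         (1 - qq ^ a * tt ^ (e.2.2 - e.2.1))⁻¹
       else qq ^ a * tt ^ (e.2.2 - e.2.1) * (1 - qq ^ a * tt ^ (e.2.2 - e.2.1))⁻¹)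

/-- `π_j = w T_{λ_1} ⋯ T_{j+1}`: the product of `w` with the entries of `T` lying in the
segments of column index `> j`. -/
def pij (n : ℕ) [NeZero n] (lam : ℕ → ℕ) (w : Equiv.Perm (Fin n)) (J : Finset ℕ) (j : ℕ) :
    Equiv.Perm (Fin n) :=
  applyTs w (pickP (chainRoots (lamChain n lam))
    (J.filter fun r => j < ((lamChain n lam).getD r (0, 0, 0)).1))

/-- The filling map `f`: `f(w,T)(i,j) = π_j(i)` on cells of λ (and `0` off the diagram). -/
def fmap (n : ℕ) [NeZero n] (lam : ℕ → ℕ) (w : Equiv.Perm (Fin n)) (J : Finset ℕ) :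
    ℕ × ℕ → ℕ :=
  fun c => if c ∈ cells n lam then pv (pij n lam w J c.2) c.1 else 0

/-- The fiber `f⁻¹(σ)` of the filling map over σ, inside `ℱ(λ)`. -/
def fiberSet (n : ℕ) [NeZero n] (lam : ℕ → ℕ) (σ : ℕ × ℕ → ℕ) :
    Finset (Equiv.Perm (Fin n) × Finset ℕ) :=
  (Finset.univ ×ˢ (Finset.range (lamChain n lam).length).powerset).filter
    fun p => ∀ u ∈ cells n lam, fmap n lam p.1 p.2 u = σ u

/-- The Finset of all nonattacking fillings `T(λ,n)` (normalized to vanish off the diagram). -/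
def TFinset (n : ℕ) (lam : ℕ → ℕ) : Finset (ℕ × ℕ → ℕ) :=
  (((cells n lam).pi fun _ => Finset.Icc 1 n).image
      fun g c => if h : c ∈ cells n lam then g c h else 0).filter
    fun σ => NonAttacking n lam σ

/-- The monomial `x^{content(σ)} = x_1^{c_1} ⋯ x_n^{c_n}` in `ℚ(q,t)[x_1,…,x_n]`. -/
def contentMon (n : ℕ) [NeZero n] (lam : ℕ → ℕ) (σ : ℕ × ℕ → ℕ) :
    MvPolynomial (Fin n) Kqt :=
  ∏ a ∈ Finset.Icc 1 n,
    (MvPolynomial.X (idx n a)) ^ (((cells n lam).filter fun c => σ c = a).card)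

/-! ### The weight μ(T) and the content vector (for Statement 4) -/

/-- `l_r = #{r' ≤ r : β_{r'} = β_r}` for the `r`-th entry of the λ-chain (0-based positions). -/
def lcount (Γ : List (ℕ × ℕ × ℕ)) (r : ℕ) : ℕ :=
  ((List.range (r + 1)).filter fun r' => (Γ.getD r' (0, 0, 0)).2 = (Γ.getD r (0, 0, 0)).2).length

/-- The affine map `r̂_r : v ↦ v − (v_i − v_k − l_r)(e_i − e_k)` of `ℝⁿ`,
for the `r`-th entry `(i,k)` of the λ-chain. -/
def hatr (n : ℕ) [NeZero n] (Γ : List (ℕ × ℕ × ℕ)) (r : ℕ) (v : Fin n → ℝ) : Fin n → ℝ :=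
  fun x =>
    v x - (v (idx n (Γ.getD r (0, 0, 0)).2.1) - v (idx n (Γ.getD r (0, 0, 0)).2.2)
            - (lcount Γ r : ℝ)) *
      ((if x = idx n (Γ.getD r (0, 0, 0)).2.1 then (1 : ℝ) else 0) -
        (if x = idx n (Γ.getD r (0, 0, 0)).2.2 then (1 : ℝ) else 0))

/-- `μ(T) = r̂_{j_1} r̂_{j_2} ⋯ r̂_{j_s}(λ) ∈ ℝⁿ` for `T` the subsequence of the λ-chain at
positions `J = {j_1 < … < j_s}`. -/
def muT (n : ℕ) [NeZero n] (lam : ℕ → ℕ) (J : Finset ℕ) : Fin n → ℝ :=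
  (J.sort (· ≤ ·)).foldr (hatr n (lamChain n lam)) fun x => (lam (x.val + 1) : ℝ)

/-- The action of `S_n` on `ℝⁿ` by permuting coordinates: `(w(v))_{w(i)} = v_i`. -/
def wAct {n : ℕ} [NeZero n] (w : Equiv.Perm (Fin n)) (v : Fin n → ℝ) : Fin n → ℝ :=
  fun x => v (w⁻¹ x)

/-- The content vector of a filling, as an element of `ℝⁿ`. -/
def contentVec (n : ℕ) (lam : ℕ → ℕ) (σ : ℕ × ℕ → ℕ) : Fin n → ℝ :=
  fun x => (((cells n lam).filter fun c => σ c = x.val + 1).card : ℝ)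

/-! ### Row sums (Statements 5 and 6) -/

/-- The weight of a subsequence `T` (at positions `J`) of a list `Δ` of transpositions, in the
single-`q` setting: `t^{(ℓ(wT)−ℓ(w)−|T|)/2}(1−t)^{|T|} Π_{(i,k)∈T⁺} 1/(1−q t^{k−i})
Π_{(i,k)∈T⁻} q t^{k−i}/(1−q t^{k−i})`, positivity in the increasing-length convention. -/
def RYrow (n : ℕ) [NeZero n] (w : Equiv.Perm (Fin n)) (Δ : List (ℕ × ℕ)) (J : Finset ℕ) : Kqt :=
  tt ^ (((len (wT w Δ J) : ℤ) - (len w : ℤ) - (J.card : ℤ)) / 2) * (1 - tt) ^ J.card *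
    ∏ r ∈ J,
      (let e := Δ.getD r (0, 0)
       if isPosInc w Δ J r then (1 - qq * tt ^ (e.2 - e.1))⁻¹
       else qq * tt ^ (e.2 - e.1) * (1 - qq * tt ^ (e.2 - e.1))⁻¹)

/-- `Δ = ((1,p+2),(1,p+3),…,(1,n))`. -/
def delta5 (n p : ℕ) : List (ℕ × ℕ) :=
  (List.range (n - p - 1)).map fun r => (1, p + 2 + r)

/-- `Δ = ((i,p+1),(i,p+2),…,(i,n))`. -/
def delta6 (n i p : ℕ) : List (ℕ × ℕ) :=
  (List.range (n - p)).map fun r => (i, p + 1 + r)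

/-! ### The field `ℚ(q_1,…,q_p,t)` and two-column fillings (Statements 7, 9, 10) -/

/-- The field `ℚ(q_1,…,q_p,t)` of rational functions in `p+1` variables. -/
abbrev Kq (p : ℕ) : Type := FractionRing (MvPolynomial (Fin (p + 1)) ℚ)

/-- The variable `q_i` (for `1 ≤ i ≤ p`). -/
def qv (p i : ℕ) : Kq p :=
  algebraMap (MvPolynomial (Fin (p + 1)) ℚ) (Kq p)
    (MvPolynomial.X ⟨(i - 1) % (p + 1), Nat.mod_lt _ (Nat.succ_pos p)⟩)

/-- The variable `t`. -/
def tv (p : ℕ) : Kq p :=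
  algebraMap (MvPolynomial (Fin (p + 1)) ℚ) (Kq p) (MvPolynomial.X ⟨p, Nat.lt_succ_self p⟩)

/-- The multi-`q` weight of a subsequence `T` (at positions `J`) of `Δ`:
`t^{(ℓ(wT)−ℓ(w)−|T|)/2}(1−t)^{|T|} Π_{(i,k)∈T⁺} 1/(1−q_i t^{k−i})
Π_{(i,k)∈T⁻} q_i t^{k−i}/(1−q_i t^{k−i})`, positivity in the increasing-length convention. -/
def RYmulti (n p : ℕ) [NeZero n] (w : Equiv.Perm (Fin n)) (Δ : List (ℕ × ℕ)) (J : Finset ℕ) :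
    Kq p :=
  tv p ^ (((len (wT w Δ J) : ℤ) - (len w : ℤ) - (J.card : ℤ)) / 2) * (1 - tv p) ^ J.card *
    ∏ r ∈ J,
      (let e := Δ.getD r (0, 0)
       if isPosInc w Δ J r then (1 - qv p e.1 * tv p ^ (e.2 - e.1))⁻¹
       else qv p e.1 * tv p ^ (e.2 - e.1) * (1 - qv p e.1 * tv p ^ (e.2 - e.1))⁻¹)

/-- `Δ = ((1,p+1),…,(1,n),(2,p+1),…,(2,n),…,(p,p+1),…,(p,n))`. -/
def delta7 (n p : ℕ) : List (ℕ × ℕ) :=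
  (List.range p).flatMap fun s => (List.range (n - p)).map fun r => (s + 1, p + 1 + r)

/-- The cells of the two-column filling `C_2C_1`, with right column (column 1) of length `p'`
and left column (column 2) of length `p`. -/
def cells2 (p p' : ℕ) : Finset (ℕ × ℕ) :=
  (Finset.Icc 1 p' ×ˢ ({1} : Finset ℕ)) ∪ (Finset.Icc 1 p ×ˢ ({2} : Finset ℕ))

/-- The entry of the two-column filling `C_2C_1` at a cell. -/
def entry2 (C2 C1 : ℕ → ℕ) : ℕ × ℕ → ℕ :=
  fun c => if c.2 = 1 then C1 c.1 else C2 c.1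

/-- `|Inv(C_2C_1)|`: the number of pairs of attacking cells `u` before `v` in reading order
with `entry(u) > entry(v)`. -/
def invPairs2 (C2 C1 : ℕ → ℕ) (p p' : ℕ) : ℕ :=
  ((cells2 p p' ×ˢ cells2 p p').filter fun x =>
    attack x.1 x.2 ∧ readBefore x.1 x.2 ∧ entry2 C2 C1 x.2 < entry2 C2 C1 x.1).card

/-- `inv(C_2C_1) = |Inv(C_2C_1)| − Σ_{u ∈ Des(C_2C_1)} leg(u)` where
`Des(C_2C_1) = {(i,1) : i ≤ p, C_1(i) > C_2(i)}` and `leg(i,1) = p' − i`. -/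
def inv2 (C2 C1 : ℕ → ℕ) (p p' : ℕ) : ℤ :=
  (invPairs2 C2 C1 p p' : ℤ) -
    ∑ i ∈ (Finset.Icc 1 p).filter fun i => C2 i < C1 i, ((p' : ℤ) - (i : ℤ))

/-- `inv(C) = #{(i,k) : i < k, C(i) > C(k)}` for a single column `C` of length `p`. -/
def invColumn (C : ℕ → ℕ) (p : ℕ) : ℕ :=
  ((Finset.Icc 1 p ×ˢ Finset.Icc 1 p).filter fun x => x.1 < x.2 ∧ C x.2 < C x.1).card

end

end Compress

/-!
Cut the diagram into its columns. An inversion of `σ` is either a pair of cells of one column,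
counted by `inv(C_j)`, or a pair in adjacent columns `j − 1, j`, exactly the pairs that `C_jC_{j−1}`
adds to `inv(C_{j−1}) + inv(C_j)`; likewise each descent of `σ` lies in some column `j − 1` and
carries the same leg in `σ` as in `C_jC_{j−1}`. Hence `Σ_j (inv(C_jC_{j−1}) − inv(C_j))` is
`inv(σ)` up to the term `inv(C_m) = 0`, and `n(λ) = Σ_{j ≤ m} C(λ'_j, 2)` with `C(λ'_m, 2) = 0`.
-/

namespace Compress

lemma filter_Icc_eq_Icc_card {N : ℕ} {p : ℕ → Prop} [DecidablePred p]
    (hp : ∀ i k, 1 ≤ i → i ≤ k → k ≤ N → p k → p i) :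
    (Finset.Icc 1 N).filter p = Finset.Icc 1 ((Finset.Icc 1 N).filter p).card := by
  set s := (Finset.Icc 1 N).filter p
  have hsub : s ⊆ Finset.Icc 1 s.card := by
    intro i hi
    simp only [s, Finset.mem_filter, Finset.mem_Icc] at hi
    have hdown : Finset.Icc 1 i ⊆ s := by
      intro k hk
      simp only [Finset.mem_Icc] at hk
      simp only [s, Finset.mem_filter, Finset.mem_Icc]
      exact ⟨⟨hk.1, hk.2.trans hi.1.2⟩, hp k i hk.1 hk.2 hi.1.2 hi.2⟩
    simpa [hi.1.1] using Finset.card_le_card hdown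
  exact Finset.eq_of_subset_of_card_le hsub (by simp)

lemma sum_Icc_sub_one_eq_choose_two (c : ℕ) : ∑ i ∈ Finset.Icc 1 c, (i - 1) = c.choose 2 := by
  induction c with
  | zero => simp
  | succ k ih =>
    rw [Finset.sum_Icc_succ_top (by omega), ih,
      show (k + 1).choose 2 = k.choose 1 + k.choose 2 from Nat.choose_succ_succ k 1,
      Nat.choose_one_right]
    omega

lemma sum_Icc_two_sub_one {M : Type*} [AddCommMonoid M] {m : ℕ} (g : ℕ → M) (hg : g m = 0) :
    ∑ j ∈ Finset.Icc 2 m, g (j - 1) = ∑ j ∈ Finset.Icc 1 m, g j := by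
  rcases m with _ | k
  · simp
  · rw [Finset.sum_Icc_succ_top (show 1 ≤ k + 1 by omega) g, hg, add_zero]
    refine Finset.sum_nbij' (· - 1) (· + 1) ?_ ?_ ?_ ?_ fun _ _ => rfl
    all_goals intro j hj
    all_goals simp only [Finset.mem_Icc] at hj ⊢
    all_goals omega

attribute [local instance] Classical.propDecidable

noncomputable section Diagram

variable {c : ℕ → ℕ} {m : ℕ}

def colCells (c : ℕ → ℕ) (m : ℕ) : Finset (ℕ × ℕ) :=
  (Finset.Icc 1 m).biUnion fun j => Finset.Icc 1 (c j) ×ˢ {j}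

@[simp]
lemma mem_colCells {u : ℕ × ℕ} :
    u ∈ colCells c m ↔ 1 ≤ u.2 ∧ u.2 ≤ m ∧ 1 ≤ u.1 ∧ u.1 ≤ c u.2 := by
  simp only [colCells, Finset.mem_biUnion, Finset.mem_product, Finset.mem_Icc,
    Finset.mem_singleton]
  constructor
  · rintro ⟨j, hj, hi, rfl⟩
    exact ⟨hj.1, hj.2, hi⟩
  · rintro ⟨hj₁, hj₂, hi⟩
    exact ⟨u.2, ⟨hj₁, hj₂⟩, hi, rfl⟩

def inversionPairs (S : Finset (ℕ × ℕ)) (f : ℕ × ℕ → ℕ) : Finset ((ℕ × ℕ) × ℕ × ℕ) :=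
  (S ×ˢ S).filter fun x => attack x.1 x.2 ∧ readBefore x.1 x.2 ∧ f x.2 < f x.1

lemma mem_inversionPairs {S : Finset (ℕ × ℕ)} {f : ℕ × ℕ → ℕ} {x : (ℕ × ℕ) × ℕ × ℕ} :
    x ∈ inversionPairs S f ↔
      x.1 ∈ S ∧ x.2 ∈ S ∧ attack x.1 x.2 ∧ readBefore x.1 x.2 ∧ f x.2 < f x.1 := by
  rw [inversionPairs, Finset.mem_filter, Finset.mem_product, and_assoc]

/-- Inversions between a left column `C2` of length `p` and a right column `C1` of length `p'`:
pairs `(k, i)` with the left cell `(i, 2)` strictly above the right cell `(k, 1)`. -/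
def crossInv (C2 C1 : ℕ → ℕ) (p p' : ℕ) : ℕ :=
  ((Finset.Icc 1 p' ×ˢ Finset.Icc 1 p).filter fun x => x.2 < x.1 ∧ C2 x.2 < C1 x.1).card

lemma card_sameColumn_inversions (f : ℕ × ℕ → ℕ) :
    ((inversionPairs (colCells c m) f).filter fun x => x.1.2 = x.2.2).card =
      ∑ j ∈ Finset.Icc 1 m, invColumn (fun i => f (i, j)) (c j) := by
  rw [Finset.card_eq_sum_card_fiberwise (f := fun x => x.2.2) (t := Finset.Icc 1 m) ?_]
  · refine Finset.sum_congr rfl fun j hj => ?_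
    rw [Finset.mem_Icc] at hj
    refine Finset.card_bij' (fun x _ => (x.1.1, x.2.1)) (fun y _ => ((y.1, j), (y.2, j)))
      ?_ ?_ ?_ ?_
    · rintro ⟨⟨i, j₁⟩, ⟨k, j₂⟩⟩ hx
      simp only [Finset.mem_filter, mem_inversionPairs] at hx
      obtain ⟨⟨⟨hu, hv, -, hread, hf⟩, rfl⟩, rfl⟩ := hx
      simp only [mem_colCells, readBefore] at hu hv hread
      simp only [Finset.mem_filter, Finset.mem_product, Finset.mem_Icc]
      omega
    · rintro ⟨i, k⟩ hy
      simp only [Finset.mem_filter, Finset.mem_product, Finset.mem_Icc] at hy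
      simp only [Finset.mem_filter, mem_inversionPairs, mem_colCells, attack, readBefore,
        true_and, and_true]
      omega
    · rintro ⟨⟨i, j₁⟩, ⟨k, j₂⟩⟩ hx
      simp only [Finset.mem_filter] at hx
      obtain ⟨⟨-, rfl⟩, rfl⟩ := hx
      rfl
    · intro y _
      rfl
  · intro x hx
    simp only [Finset.mem_coe, Finset.mem_filter, mem_inversionPairs, mem_colCells] at hx
    simp only [Finset.mem_coe, Finset.mem_Icc]
    omega

lemma card_crossColumn_inversions (f : ℕ × ℕ → ℕ) :
    ((inversionPairs (colCells c m) f).filter fun x => ¬x.1.2 = x.2.2).card =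
      ∑ j ∈ Finset.Icc 2 m,
        crossInv (fun i => f (i, j)) (fun i => f (i, j - 1)) (c j) (c (j - 1)) := by
  rw [Finset.card_eq_sum_card_fiberwise (f := fun x => x.2.2) (t := Finset.Icc 2 m) ?_]
  · refine Finset.sum_congr rfl fun j hj => ?_
    rw [Finset.mem_Icc] at hj
    refine Finset.card_bij' (fun x _ => (x.1.1, x.2.1))
      (fun y _ => ((y.1, j - 1), (y.2, j))) ?_ ?_ ?_ ?_
    · rintro ⟨⟨k, j₁⟩, ⟨i, j₂⟩⟩ hx
      simp only [Finset.mem_filter, mem_inversionPairs] at hx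
      obtain ⟨⟨⟨hu, hv, hatt, hread, hf⟩, hne⟩, rfl⟩ := hx
      simp only [mem_colCells, attack, readBefore] at hu hv hatt hread hne
      obtain rfl : j₁ = j₂ - 1 := by omega
      simp only [Finset.mem_filter, Finset.mem_product, Finset.mem_Icc]
      omega
    · rintro ⟨k, i⟩ hy
      simp only [Finset.mem_filter, Finset.mem_product, Finset.mem_Icc] at hy
      simp only [Finset.mem_filter, mem_inversionPairs, mem_colCells, attack, readBefore,
        and_true]
      omega
    · rintro ⟨⟨k, j₁⟩, ⟨i, j₂⟩⟩ hx
      simp only [Finset.mem_filter, mem_inversionPairs] at hx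
      obtain ⟨⟨⟨-, -, hatt, hread, -⟩, hne⟩, rfl⟩ := hx
      simp only [attack, readBefore] at hatt hread hne
      obtain rfl : j₁ = j₂ - 1 := by omega
      rfl
    · intro y _
      rfl
  · intro x hx
    simp only [Finset.mem_coe, Finset.mem_filter, mem_inversionPairs] at hx
    obtain ⟨⟨hu, hv, hatt, hread, -⟩, hne⟩ := hx
    simp only [mem_colCells, attack, readBefore] at hu hv hatt hread hne
    simp only [Finset.mem_coe, Finset.mem_Icc]
    omega

theorem card_inversionPairs_colCells (f : ℕ × ℕ → ℕ) :
    (inversionPairs (colCells c m) f).card =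
      ∑ j ∈ Finset.Icc 1 m, invColumn (fun i => f (i, j)) (c j) +
        ∑ j ∈ Finset.Icc 2 m,
          crossInv (fun i => f (i, j)) (fun i => f (i, j - 1)) (c j) (c (j - 1)) := by
  rw [← Finset.card_filter_add_card_filter_not (p := fun x => x.1.2 = x.2.2),
    card_sameColumn_inversions, card_crossColumn_inversions]

def desLegSum (C2 C1 : ℕ → ℕ) (p p' : ℕ) : ℤ :=
  ∑ i ∈ (Finset.Icc 1 p).filter fun i => C2 i < C1 i, ((p' : ℤ) - (i : ℤ))

lemma sum_desLeg_colCells (hc : Antitone c) (f : ℕ × ℕ → ℕ) :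
    ∑ u ∈ (colCells c m).filter
        (fun u => (u.1, u.2 + 1) ∈ colCells c m ∧ f (u.1, u.2 + 1) < f u),
        ((c u.2 : ℤ) - u.1) =
      ∑ j ∈ Finset.Icc 2 m,
        desLegSum (fun i => f (i, j)) (fun i => f (i, j - 1)) (c j) (c (j - 1)) := by
  rw [← Finset.sum_fiberwise_of_maps_to (g := fun u => u.2 + 1) (t := Finset.Icc 2 m) ?_]
  · refine Finset.sum_congr rfl fun j hj => ?_
    rw [Finset.mem_Icc] at hj
    have hcj : c j ≤ c (j - 1) := hc (Nat.sub_le j 1)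
    refine Finset.sum_nbij' (fun u => u.1) (fun i => (i, j - 1)) ?_ ?_ ?_ ?_ ?_
    · rintro ⟨i, j'⟩ hu
      simp only [Finset.mem_filter, mem_colCells] at hu
      obtain ⟨⟨-, hv, hf⟩, rfl⟩ := hu
      simp only [Nat.add_sub_cancel] at hf ⊢
      simp only [Finset.mem_filter, Finset.mem_Icc]
      omega
    · intro i hi
      simp only [Finset.mem_filter, Finset.mem_Icc] at hi
      have hj1 : j - 1 + 1 = j := by omega
      simp only [Finset.mem_filter, mem_colCells, hj1, and_true]
      omega
    · rintro ⟨i, j'⟩ hu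
      simp only [Finset.mem_filter] at hu
      obtain ⟨-, rfl⟩ := hu
      rfl
    · intro i _
      rfl
    · rintro ⟨i, j'⟩ hu
      simp only [Finset.mem_filter] at hu
      obtain ⟨-, rfl⟩ := hu
      rfl
  · intro u hu
    simp only [Finset.mem_filter, mem_colCells] at hu
    simp only [Finset.mem_Icc]
    omega

end Diagram

lemma cells2_eq_colCells (p p' : ℕ) :
    cells2 p p' = colCells (fun j => if j = 1 then p' else p) 2 := by
  ext ⟨i, j⟩
  simp only [cells2, Finset.mem_union, Finset.mem_product, Finset.mem_Icc,
    Finset.mem_singleton, mem_colCells]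
  constructor
  · rintro (⟨hi, rfl⟩ | ⟨hi, rfl⟩) <;> simp [hi]
  · rintro ⟨hj₁, hj₂, hi⟩
    rcases (by omega : j = 1 ∨ j = 2) with rfl | rfl <;> simp_all

lemma invPairs2_eq (C2 C1 : ℕ → ℕ) (p p' : ℕ) :
    invPairs2 C2 C1 p p' = invColumn C1 p' + invColumn C2 p + crossInv C2 C1 p p' := by
  rw [show invPairs2 C2 C1 p p' = (inversionPairs (cells2 p p') (entry2 C2 C1)).card from rfl,
    cells2_eq_colCells, card_inversionPairs_colCells]
  simp [entry2, show Finset.Icc 1 2 = {1, 2} from rfl]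

lemma inv2_sub_invColumn (C2 C1 : ℕ → ℕ) (p p' : ℕ) :
    inv2 C2 C1 p p' - invColumn C2 p =
      invColumn C1 p' + crossInv C2 C1 p p' - desLegSum C2 C1 p p' := by
  rw [inv2, invPairs2_eq, desLegSum]
  push_cast
  ring

lemma invColumn_eq_zero_of_le_one (C : ℕ → ℕ) {p : ℕ} (hp : p ≤ 1) : invColumn C p = 0 := by
  rw [invColumn, Finset.card_eq_zero, Finset.filter_eq_empty_iff]
  intro x hx
  simp only [Finset.mem_product, Finset.mem_Icc] at hx
  omega

section Partition

variable {n : ℕ} {lam : ℕ → ℕ}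

lemma conj_antitone (n : ℕ) (lam : ℕ → ℕ) : Antitone (conj n lam) :=
  fun _ _ h => Finset.card_le_card (Finset.monotone_filter_right _ fun _ _ hi => h.trans hi)

lemma filter_le_eq_Icc_conj (hlam : AntitoneOn lam (Set.Icc 1 (n - 1))) (j : ℕ) :
    (Finset.Icc 1 (n - 1)).filter (fun i => j ≤ lam i) = Finset.Icc 1 (conj n lam j) :=
  filter_Icc_eq_Icc_card fun _ _ hi hik hk hjk =>
    hjk.trans (hlam ⟨hi, hik.trans hk⟩ ⟨hi.trans hik, hk⟩ hik)

lemma cells_eq_colCells (hlam : AntitoneOn lam (Set.Icc 1 (n - 1))) :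
    cells n lam = colCells (conj n lam) (lam 1) := by
  ext ⟨i, j⟩
  have hrow := Finset.ext_iff.1 (filter_le_eq_Icc_conj hlam j) i
  simp only [Finset.mem_filter, Finset.mem_Icc] at hrow
  simp only [cells, Finset.mem_filter, Finset.mem_product, Finset.mem_Icc, mem_colCells]
  tauto

lemma conj_lam_one_le_one (hlam : StrictAntiOn lam (Set.Icc 1 (n - 1))) :
    conj n lam (lam 1) ≤ 1 := by
  refine (Finset.card_le_card fun i hi => ?_).trans (Finset.card_singleton 1).le
  simp only [Finset.mem_filter, Finset.mem_Icc] at hi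
  by_contra hi1
  rw [Finset.mem_singleton] at hi1
  have := hlam ⟨le_rfl, hi.1.1.trans hi.1.2⟩ ⟨hi.1.1, hi.1.2⟩ (by omega)
  omega

lemma nlam_eq_sum_choose (hlam : AntitoneOn lam (Set.Icc 1 (n - 1))) (hzero : lam n = 0) :
    nlam n lam = ∑ j ∈ Finset.Icc 1 (lam 1), (conj n lam j).choose 2 := by
  have hrows : nlam n lam = ∑ i ∈ Finset.Icc 1 (n - 1), (i - 1) * lam i := by
    refine (Finset.sum_subset (Finset.Icc_subset_Icc_right (Nat.sub_le n 1)) ?_).symm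
    intro i hi hi'
    simp only [Finset.mem_Icc] at hi hi'
    rw [show i = n by omega, hzero, mul_zero]
  have hrow : ∀ i ∈ Finset.Icc 1 (n - 1),
      (i - 1) * lam i = ∑ j ∈ Finset.Icc 1 (lam 1), if j ≤ lam i then i - 1 else 0 := by
    intro i hi
    rw [Finset.mem_Icc] at hi
    have hle : lam i ≤ lam 1 := hlam ⟨le_rfl, hi.1.trans hi.2⟩ ⟨hi.1, hi.2⟩ hi.1
    rw [← Finset.sum_filter, Finset.sum_const, smul_eq_mul, mul_comm,
      show (Finset.Icc 1 (lam 1)).filter (· ≤ lam i) = Finset.Icc 1 (lam i) by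
        ext; simp only [Finset.mem_filter, Finset.mem_Icc]; omega,
      Nat.card_Icc, Nat.add_sub_cancel]
  rw [hrows, Finset.sum_congr rfl hrow, Finset.sum_comm]
  refine Finset.sum_congr rfl fun j _ => ?_
  rw [← Finset.sum_filter, filter_le_eq_Icc_conj hlam, sum_Icc_sub_one_eq_choose_two]

lemma invPairsL_eq_sum (hlam : AntitoneOn lam (Set.Icc 1 (n - 1))) (σ : ℕ × ℕ → ℕ) :
    invPairsL n lam σ =
      ∑ j ∈ Finset.Icc 1 (lam 1), invColumn (fun i => σ (i, j)) (conj n lam j) +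
        ∑ j ∈ Finset.Icc 2 (lam 1), crossInv (fun i => σ (i, j)) (fun i => σ (i, j - 1))
          (conj n lam j) (conj n lam (j - 1)) := by
  rw [show invPairsL n lam σ = (inversionPairs (cells n lam) σ).card from rfl,
    cells_eq_colCells hlam, card_inversionPairs_colCells]

lemma sum_legC_desSet (hlam : AntitoneOn lam (Set.Icc 1 (n - 1))) (σ : ℕ × ℕ → ℕ) :
    ∑ u ∈ DesSet n lam σ, (legC n lam u : ℤ) =
      ∑ j ∈ Finset.Icc 2 (lam 1), desLegSum (fun i => σ (i, j)) (fun i => σ (i, j - 1))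
        (conj n lam j) (conj n lam (j - 1)) := by
  rw [← sum_desLeg_colCells (conj_antitone n lam), DesSet, cells_eq_colCells hlam]
  refine Finset.sum_congr rfl fun u hu => ?_
  simp only [Finset.mem_filter, mem_colCells] at hu
  rw [legC, Nat.cast_sub hu.1.2.2.2]

end Partition

theorem column_statistics_sum_general (n : ℕ) (lam : ℕ → ℕ)
    (hreg : ∀ i, 1 ≤ i → i < n → lam (i + 1) < lam i) (hzero : lam n = 0)
    (σ : ℕ × ℕ → ℕ) :
    (∑ j ∈ Finset.Icc 2 (lam 1), ((conj n lam (j - 1)).choose 2 : ℤ))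
        - ∑ j ∈ Finset.Icc 2 (lam 1),
            (inv2 (fun i => σ (i, j)) (fun i => σ (i, j - 1))
                (conj n lam j) (conj n lam (j - 1))
              - (invColumn (fun i => σ (i, j)) (conj n lam j) : ℤ))
      = (nlam n lam : ℤ) - invStat n lam σ := by
  have hlam : StrictAntiOn lam (Set.Icc 1 (n - 1)) :=
    strictAntiOn_of_succ_lt Set.ordConnected_Icc fun i _ hi hi' => by
      rw [Order.succ_eq_add_one, Set.mem_Icc] at hi'
      rw [Order.succ_eq_add_one]
      exact hreg i hi.1 (by omega)
  have htop : conj n lam (lam 1) ≤ 1 := conj_lam_one_le_one hlam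
  have hchoose := sum_Icc_two_sub_one (m := lam 1) (fun j => ((conj n lam j).choose 2 : ℤ))
    (by simp [Nat.choose_eq_zero_of_lt (htop.trans_lt one_lt_two)])
  have hcol := sum_Icc_two_sub_one (m := lam 1)
    (fun j => (invColumn (fun i => σ (i, j)) (conj n lam j) : ℤ))
    (by simp [invColumn_eq_zero_of_le_one _ htop])
  rw [invStat, invPairsL_eq_sum hlam.antitoneOn, sum_legC_desSet hlam.antitoneOn,
    nlam_eq_sum_choose hlam.antitoneOn hzero, hchoose,
    Finset.sum_congr rfl fun j _ => inv2_sub_invColumn _ _ _ _]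
  simp only [Finset.sum_sub_distrib, Finset.sum_add_distrib]
  push_cast
  rw [hcol]

/-- For a nonattacking filling `σ ∈ T(λ,n)` with columns `C_j` of lengths
`c_j = λ'_j`: `Σ_{j=2}^m C(c_{j−1},2) − Σ_{j=2}^m (inv(C_jC_{j−1}) − inv(C_j)) = n(λ) − inv(σ)`. -/
theorem column_statistics_sum (n : ℕ) (hn : 2 ≤ n) (lam : ℕ → ℕ)
    (hreg : ∀ i, 1 ≤ i → i < n → lam (i + 1) < lam i) (hzero : lam n = 0)
    (σ : ℕ × ℕ → ℕ) (hσ : NonAttacking n lam σ) :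
    (∑ j ∈ Finset.Icc 2 (lam 1), ((conj n lam (j - 1)).choose 2 : ℤ))
        - ∑ j ∈ Finset.Icc 2 (lam 1),
            (inv2 (fun i => σ (i, j)) (fun i => σ (i, j - 1))
                (conj n lam j) (conj n lam (j - 1))
              - (invColumn (fun i => σ (i, j)) (conj n lam j) : ℤ))
      = (nlam n lam : ℤ) - invStat n lam σ :=
  column_statistics_sum_general n lam hreg hzero σ

end Compress
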